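/- Under the logistic partially linear model P(Y=1 | A,X) = expit(β₀A + r₀(X)), for any measurable function m of X (with suitable integrability), E[(Y e^{-β₀A} - (1-Y) e^{r₀(X)})(A - m(X))] = 0. -/

import Mathlib

/-! Because `expit (a + r) · (e^{-a} + e^{r}) = e^{r}`, the integrand factors as
`(A - m(X)) (e^{-β₀A} + e^{r₀(X)}) · (Y - expit (β₀A + r₀(X)))`. Under the model the second factor
is `Y - E[Y | A, X]`, while the first is `(A, X)`-measurable; pulling it out of the conditional
expectation given `(A, X)` leaves `E[Y - E[Y | A, X] | A, X] = 0`, whatever `m` is. -/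

open MeasureTheory Real

noncomputable def expit (t : ℝ) : ℝ := 1 / (1 + Real.exp (-t))

lemma expit_pos (t : ℝ) : 0 < expit t := by
  unfold expit
  positivity

lemma mul_exp_neg_sub_mul_exp_eq_mul_sub_expit (y a r : ℝ) :
    y * exp (-a) - (1 - y) * exp r = (exp (-a) + exp r) * (y - expit (a + r)) := by
  have hsplit : exp (-a) = exp r * exp (-(a + r)) := by
    rw [← exp_add]
    ring_nf
  unfold expit
  field_simp
  rw [hsplit]
  ring

section CondExp

variable {Ω : Type*} {m m₀ : MeasurableSpace Ω} {μ : Measure Ω}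

-- Mathlib's `μ[g | m]` is `0` for non-integrable `g`.
lemma integrable_of_condExp_ae_eq_of_ne_zero [NeZero μ] {g c : Ω → ℝ}
    (hgc : μ[g | m] =ᵐ[μ] c) (hc : ∀ ω, c ω ≠ 0) : Integrable g μ := by
  by_contra hg
  rw [condExp_of_not_integrable hg] at hgc
  obtain ⟨ω, hω⟩ := hgc.exists
  exact hc ω hω.symm

lemma integral_mul_sub_condExp_eq_zero (hm : m ≤ m₀) [SigmaFinite (μ.trim hm)] {f g : Ω → ℝ}
    (hf : StronglyMeasurable[m] f) (hg : Integrable g μ)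
    (hfg : Integrable (f * (g - μ[g | m])) μ) :
    ∫ ω, f ω * (g ω - μ[g | m] ω) ∂μ = 0 := by
  have hresidual : μ[g - μ[g | m] | m] =ᵐ[μ] 0 := by
    filter_upwards [condExp_sub hg integrable_condExp m] with ω hω
    rw [hω, Pi.sub_apply, condExp_of_stronglyMeasurable hm stronglyMeasurable_condExp
      integrable_condExp, sub_self, Pi.zero_apply]
  calc ∫ ω, f ω * (g ω - μ[g | m] ω) ∂μ
      = ∫ ω, μ[f * (g - μ[g | m]) | m] ω ∂μ := (integral_condExp hm).symm
    _ = ∫ ω, f ω * μ[g - μ[g | m] | m] ω ∂μ :=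
        integral_congr_ae (condExp_mul_of_stronglyMeasurable_left hf hfg
          (hg.sub integrable_condExp))
    _ = ∫ _, (0 : ℝ) ∂μ :=
        integral_congr_ae (hresidual.mono fun ω hω => by simp only [hω, Pi.zero_apply, mul_zero])
    _ = 0 := integral_zero Ω ℝ

end CondExp

theorem stmt_1_general {Ω S : Type*} [MeasurableSpace Ω] [MeasurableSpace S]
    (μ : Measure Ω) [IsProbabilityMeasure μ]
    (Y A : Ω → ℝ) (X : Ω → S) (β₀ : ℝ) (r₀ m : S → ℝ)
    (hA : Measurable A) (hX : Measurable X) (hr : Measurable r₀) (hm : Measurable m)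
    (hint : Integrable (fun ω =>
      (Y ω * Real.exp (-(β₀ * A ω)) - (1 - Y ω) * Real.exp (r₀ (X ω))) * (A ω - m (X ω))) μ)
    (hmodel : μ[Y | MeasurableSpace.comap (fun ω => (A ω, X ω)) inferInstance]
      =ᵐ[μ] fun ω => expit (β₀ * A ω + r₀ (X ω))) :
    ∫ ω, (Y ω * Real.exp (-(β₀ * A ω)) - (1 - Y ω) * Real.exp (r₀ (X ω)))
      * (A ω - m (X ω)) ∂μ = 0 := by
  have hle : MeasurableSpace.comap (fun ω => (A ω, X ω)) inferInstance ≤ ‹MeasurableSpace Ω› :=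
    (hA.prodMk hX).comap_le
  set f : Ω → ℝ := fun ω => (A ω - m (X ω)) * (exp (-(β₀ * A ω)) + exp (r₀ (X ω)))
  have hf : StronglyMeasurable[MeasurableSpace.comap (fun ω => (A ω, X ω)) inferInstance] f := by
    have hg : Measurable fun p : ℝ × S => (p.1 - m p.2) * (exp (-(β₀ * p.1)) + exp (r₀ p.2)) := by
      fun_prop
    exact (hg.comp (comap_measurable _)).stronglyMeasurable
  have hY : Integrable Y μ :=
    integrable_of_condExp_ae_eq_of_ne_zero hmodel fun ω => (expit_pos _).ne'
  have hfactor : (fun ω => (Y ω * exp (-(β₀ * A ω)) - (1 - Y ω) * exp (r₀ (X ω)))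
      * (A ω - m (X ω))) =ᵐ[μ]
      f * (Y - μ[Y | MeasurableSpace.comap (fun ω => (A ω, X ω)) inferInstance]) := by
    filter_upwards [hmodel] with ω hω
    rw [Pi.mul_apply, Pi.sub_apply, hω, mul_exp_neg_sub_mul_exp_eq_mul_sub_expit]
    ring
  rw [integral_congr_ae hfactor]
  exact integral_mul_sub_condExp_eq_zero hle hf hY (hint.congr hfactor)

theorem stmt_1 {Ω S : Type*} [MeasurableSpace Ω] [MeasurableSpace S]
    (μ : Measure Ω) [IsProbabilityMeasure μ]
    (Y A : Ω → ℝ) (X : Ω → S) (β₀ : ℝ) (r₀ m : S → ℝ)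
    (hY : ∀ ω, Y ω = 0 ∨ Y ω = 1)
    (hA : Measurable A) (hX : Measurable X) (hr : Measurable r₀) (hm : Measurable m)
    (hint : Integrable (fun ω =>
      (Y ω * Real.exp (-(β₀ * A ω)) - (1 - Y ω) * Real.exp (r₀ (X ω))) * (A ω - m (X ω))) μ)
    (hmodel : μ[Y | MeasurableSpace.comap (fun ω => (A ω, X ω)) inferInstance]
      =ᵐ[μ] fun ω => expit (β₀ * A ω + r₀ (X ω))) :
    ∫ ω, (Y ω * Real.exp (-(β₀ * A ω)) - (1 - Y ω) * Real.exp (r₀ (X ω)))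
      * (A ω - m (X ω)) ∂μ = 0 :=
  stmt_1_general μ Y A X β₀ r₀ m hA hX hr hm hint hmodel
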